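/- Let n ≥ 1 and p > n. Define u : ℝⁿ → ℝ by u(x) = Σ_{j=0}^∞ max(0, 1 - 2^{-j} |x - (4^j, 0, …, 0)|). Then u is Lipschitz on each ball, the function g(x) = Σ_{j=0}^∞ 2^{-j} χ_{B((4^j,0,…,0), 2^j)}(x) is an upper bound for the local Lipschitz constant of u almost everywhere, and ∫_{ℝⁿ} g^p dx = ω_n Σ_{j=0}^∞ 2^{j(n-p)} < ∞, where ω_n is the Lebesgue measure of the unit ball in ℝⁿ. -/

import Mathlib

/-!
The balls `B(cⱼ, 2ʲ)` are pairwise disjoint and the `j`-th tent is supported in its ball and is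
`2⁻ʲ`-Lipschitz, so at every point `u` and `g` reduce to the single term of the ball containing it
(or to `0`). This gives a global Lipschitz bound, and the bound by `g` off the null union of the
boundary spheres: there a small neighbourhood meets at most one tent, because the closed balls
form a locally finite family. The energy integral splits over the disjoint balls into
`∑ⱼ 2^(-jp) |B(cⱼ, 2ʲ)| = ω_n ∑ⱼ 2^(j(n-p))`.
-/

open MeasureTheory Set Metric ENNReal NNReal Filter Function

section DisjointSupports

variable {ι X M : Type*} [AddCommMonoid M] [TopologicalSpace M] {s : ι → Set X} {f : ι → X → M}
  {x : X}

theorem tsum_apply_of_forall_notMem (hf : ∀ i, support (f i) ⊆ s i) (hx : ∀ i, x ∉ s i) :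
    ∑' i, f i x = 0 :=
  (tsum_congr fun i => notMem_support.mp fun h => hx i (hf i h)).trans tsum_zero

theorem tsum_apply_of_mem (hs : Pairwise (Disjoint on s)) (hf : ∀ i, support (f i) ⊆ s i)
    {j : ι} (hx : x ∈ s j) : ∑' i, f i x = f j x :=
  tsum_eq_single j fun _ hij => notMem_support.mp fun h => (hs hij).notMem_of_mem_right hx (hf _ h)

end DisjointSupports

theorem lipschitzWith_tsum_of_disjoint_support {ι X : Type*} [PseudoMetricSpace X]
    {s : ι → Set X} {f : ι → X → ℝ} {K : ℝ≥0} (hs : Pairwise (Disjoint on s))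
    (hfs : ∀ i, support (f i) ⊆ s i) (hf0 : ∀ i x, 0 ≤ f i x) (hf : ∀ i, LipschitzWith K (f i)) :
    LipschitzWith K fun x => ∑' i, f i x := by
  have le_tsum : ∀ i y, f i y ≤ ∑' j, f j y := fun i y => by
    by_cases hy : y ∈ s i
    · rw [tsum_apply_of_mem hs hfs hy]
    · rw [notMem_support.mp fun h => hy (hfs i h)]
      exact tsum_nonneg (hf0 · y)
  refine LipschitzWith.of_le_add_mul K fun x y => ?_
  by_cases hx : ∃ i, x ∈ s i
  · obtain ⟨i, hi⟩ := hx
    rw [tsum_apply_of_mem hs hfs hi]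
    exact ((hf i).le_add_mul x y).trans (by gcongr; exact le_tsum i y)
  · push Not at hx
    rw [tsum_apply_of_forall_notMem hfs hx]
    exact add_nonneg (tsum_nonneg (hf0 · y)) (by positivity)

theorem locallyFinite_closedBall_of_tendsto {ι X : Type*} [PseudoMetricSpace X] {c : ι → X}
    {r : ι → ℝ} {x₀ : X} (h : Tendsto (fun i => dist x₀ (c i) - r i) cofinite atTop) :
    LocallyFinite fun i => closedBall (c i) (r i) := by
  intro x
  refine ⟨ball x 1, ball_mem_nhds x one_pos,
    (eventually_cofinite.1 (h.eventually_gt_atTop (dist x₀ x + 1))).subset ?_⟩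
  rintro i ⟨z, hzc, hzx⟩
  rw [mem_closedBall] at hzc
  rw [mem_ball, dist_comm] at hzx
  have := dist_triangle4 x₀ x z (c i)
  simp only [mem_ofPred_eq, not_lt]
  linarith

section Tents

variable {ι X : Type*} [MetricSpace X]

noncomputable def tent (c : X) (r : ℝ) (x : X) : ℝ :=
  max 0 (1 - dist x c / r)

noncomputable def tentSum (c : ι → X) (r : ι → ℝ) (x : X) : ℝ :=
  ∑' i, tent (c i) (r i) x

noncomputable def tentSlope (c : ι → X) (r : ι → ℝ) (x : X) : ℝ :=
  ∑' i, (ball (c i) (r i)).indicator (fun _ => (r i)⁻¹) x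

theorem tent_nonneg (c : X) (r : ℝ) (x : X) : 0 ≤ tent c r x :=
  le_max_left _ _

theorem abs_tent_sub_tent_le (c : X) {r : ℝ} (hr : 0 ≤ r) (x y : X) :
    |tent c r y - tent c r x| ≤ r⁻¹ * dist y x := by
  unfold tent
  rw [max_comm 0, max_comm 0]
  refine (abs_max_sub_max_le_abs _ _ 0).trans ?_
  rw [show 1 - dist y c / r - (1 - dist x c / r) = (dist x c - dist y c) / r by ring, abs_div,
    abs_of_nonneg hr, div_eq_inv_mul]
  gcongr
  exact dist_comm x y ▸ abs_dist_sub_le x y c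

theorem support_tent_subset (c : X) {r : ℝ} (hr : 0 < r) : support (tent c r) ⊆ ball c r := by
  intro x hx
  by_contra hxb
  rw [mem_ball, not_lt, ← one_le_div hr] at hxb
  exact hx (max_eq_left (by linarith))

variable {c : ι → X} {r : ι → ℝ}

theorem lipschitzWith_tentSum {K : ℝ≥0} (hr : ∀ i, 0 < r i) (hrK : ∀ i, (r i)⁻¹ ≤ K)
    (hs : Pairwise (Disjoint on fun i => ball (c i) (r i))) : LipschitzWith K (tentSum c r) :=
  lipschitzWith_tsum_of_disjoint_support hs (fun i => support_tent_subset (c i) (hr i))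
    (fun i => tent_nonneg (c i) (r i)) fun i => LipschitzWith.of_dist_le_mul fun x y => by
      rw [Real.dist_eq]
      exact (abs_tent_sub_tent_le (c i) (hr i).le y x).trans (by gcongr; exact hrK i)

theorem exists_abs_tentSum_sub_le_of_notMem_sphere (hr : ∀ i, 0 < r i)
    (hs : Pairwise (Disjoint on fun i => ball (c i) (r i)))
    (hlf : LocallyFinite fun i => closedBall (c i) (r i)) {x : X}
    (hx : ∀ i, x ∉ sphere (c i) (r i)) :
    ∃ ε > 0, ∀ y ∈ ball x ε, |tentSum c r y - tentSum c r x| ≤ tentSlope c r x * dist y x := by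
  have htent := fun i => support_tent_subset (c i) (hr i)
  have hind (i : ι) : support ((ball (c i) (r i)).indicator fun _ => (r i)⁻¹) ⊆ ball (c i) (r i) :=
    support_indicator_subset
  by_cases hxb : ∃ j, x ∈ ball (c j) (r j)
  · obtain ⟨j, hj⟩ := hxb
    refine ⟨r j - dist x (c j), sub_pos.2 hj, fun y hy => ?_⟩
    have hyj : y ∈ ball (c j) (r j) := ball_subset_ball' (by rw [sub_add_cancel]) hy
    rw [tentSlope, tentSum, tentSum, tsum_apply_of_mem hs htent hj, tsum_apply_of_mem hs htent hyj,
      tsum_apply_of_mem hs hind hj, indicator_of_mem hj]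
    exact abs_tent_sub_tent_le (c j) (hr j).le x y
  · push Not at hxb
    have hxc : x ∈ (⋃ i, closedBall (c i) (r i))ᶜ := by
      simp only [mem_compl_iff, mem_iUnion, ← ball_union_sphere, mem_union, not_exists, not_or]
      exact fun i => ⟨hxb i, hx i⟩
    obtain ⟨ε, hε, hball⟩ :=
      Metric.isOpen_iff.1 (hlf.isClosed_iUnion fun _ => isClosed_closedBall).isOpen_compl x hxc
    refine ⟨ε, hε, fun y hy => ?_⟩
    have hyb (i : ι) : y ∉ ball (c i) (r i) :=
      fun h => hball hy (mem_iUnion.2 ⟨i, ball_subset_closedBall h⟩)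
    rw [tentSum, tentSum, tentSlope, tsum_apply_of_forall_notMem htent hxb,
      tsum_apply_of_forall_notMem htent hyb, tsum_apply_of_forall_notMem hind hxb]
    simp

theorem ae_exists_abs_tentSum_sub_le [Countable ι] [MeasurableSpace X] (μ : Measure X)
    (hr : ∀ i, 0 < r i) (hs : Pairwise (Disjoint on fun i => ball (c i) (r i)))
    (hlf : LocallyFinite fun i => closedBall (c i) (r i))
    (hsphere : ∀ i, μ (sphere (c i) (r i)) = 0) :
    ∀ᵐ x ∂μ, ∃ ε > 0, ∀ y ∈ ball x ε,
      |tentSum c r y - tentSum c r x| ≤ tentSlope c r x * dist y x := by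
  filter_upwards [ae_all_iff.2 fun i => measure_eq_zero_iff_ae_notMem.1 (hsphere i)] with x hx
  exact exists_abs_tentSum_sub_le_of_notMem_sphere hr hs hlf hx

end Tents

theorem lintegral_ofReal_tsum_indicator_rpow {ι X : Type*} [Countable ι] [MeasurableSpace X]
    (μ : Measure X) {s : ι → Set X} (hsm : ∀ i, MeasurableSet (s i))
    (hs : Pairwise (Disjoint on s)) (a : ι → ℝ) {p : ℝ} (hp : 0 < p) :
    ∫⁻ x, ENNReal.ofReal ((∑' i, (s i).indicator (fun _ => a i) x) ^ p) ∂μ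
      = ∑' i, ENNReal.ofReal (a i ^ p) * μ (s i) := by
  have ha (i : ι) : support ((s i).indicator fun _ => a i) ⊆ s i := support_indicator_subset
  have hap (i : ι) : support ((s i).indicator fun _ => ENNReal.ofReal (a i ^ p)) ⊆ s i :=
    support_indicator_subset
  have hpt (x : X) : ENNReal.ofReal ((∑' i, (s i).indicator (fun _ => a i) x) ^ p)
      = ∑' i, (s i).indicator (fun _ => ENNReal.ofReal (a i ^ p)) x := by
    by_cases hx : ∃ j, x ∈ s j
    · obtain ⟨j, hj⟩ := hx
      rw [tsum_apply_of_mem hs ha hj, tsum_apply_of_mem hs hap hj,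
        indicator_of_mem hj, indicator_of_mem hj]
    · push Not at hx
      rw [tsum_apply_of_forall_notMem ha hx, tsum_apply_of_forall_notMem hap hx,
        Real.zero_rpow hp.ne', ENNReal.ofReal_zero]
  simp_rw [hpt]
  rw [lintegral_tsum fun i => (measurable_const.indicator (hsm i)).aemeasurable]
  simp_rw [lintegral_indicator_const (hsm _)]

theorem summable_rpow_natCast_mul {b q : ℝ} (hb : 1 < b) (hq : q < 0) :
    Summable fun j : ℕ => b ^ ((j : ℝ) * q) := by
  refine (summable_geometric_of_lt_one (Real.rpow_nonneg (by linarith) q)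
    (Real.rpow_lt_one_of_one_lt_of_neg hb hq)).congr fun j => ?_
  rw [← Real.rpow_natCast, ← Real.rpow_mul (by linarith), mul_comm]

theorem tsum_ofReal_inv_rpow_mul_addHaar_ball {E : Type*} [NormedAddCommGroup E]
    [NormedSpace ℝ E] [MeasurableSpace E] [BorelSpace E] [FiniteDimensional ℝ E] (μ : Measure E)
    [μ.IsAddHaarMeasure] (x : ℕ → E) {b p : ℝ} (hb : 0 < b)
    (hsum : Summable fun j : ℕ => b ^ ((j : ℝ) * (Module.finrank ℝ E - p))) :
    ∑' j : ℕ, ENNReal.ofReal ((b ^ j)⁻¹ ^ p) * μ (ball (x j) (b ^ j))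
      = μ (ball 0 1) * ENNReal.ofReal (∑' j : ℕ, b ^ ((j : ℝ) * (Module.finrank ℝ E - p))) := by
  have hterm (j : ℕ) : ENNReal.ofReal ((b ^ j)⁻¹ ^ p) * μ (ball (x j) (b ^ j))
      = ENNReal.ofReal (b ^ ((j : ℝ) * (Module.finrank ℝ E - p))) * μ (ball 0 1) := by
    rw [μ.addHaar_ball_of_pos _ (pow_pos hb j), ← mul_assoc, ← ENNReal.ofReal_mul (by positivity),
      ← Real.rpow_natCast b j, ← Real.rpow_neg hb.le, ← Real.rpow_natCast _ (Module.finrank ℝ E),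
      ← Real.rpow_mul hb.le, ← Real.rpow_mul hb.le, ← Real.rpow_add hb]
    ring_nf
  rw [tsum_congr hterm, ENNReal.tsum_mul_right,
    ENNReal.ofReal_tsum_of_nonneg (fun j => by positivity) hsum, mul_comm]

section FourPowBalls

variable {ι : Type*} [Fintype ι] [DecidableEq ι] (k : ι)

theorem two_pow_add_two_pow_le_four_pow_sub {i j : ℕ} (hij : i < j) :
    (2 : ℝ) ^ i + 2 ^ j ≤ 4 ^ j - 4 ^ i := by
  have h4 (m : ℕ) : (4 : ℝ) ^ m = 2 ^ m * 2 ^ m := by rw [← mul_pow]; norm_num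
  have h1 : (1 : ℝ) ≤ 2 ^ i := one_le_pow₀ (by norm_num)
  have h2 : (2 : ℝ) * 2 ^ i ≤ 2 ^ j := by
    rw [← pow_succ']
    exact pow_le_pow_right₀ (by norm_num) hij
  rw [h4, h4]
  nlinarith

theorem pairwise_disjoint_ball_single_four_pow :
    Pairwise (Disjoint on fun j : ℕ => ball (EuclideanSpace.single k ((4 : ℝ) ^ j)) (2 ^ j)) := by
  refine (pairwise_disjoint_on _).2 fun i j hij => ball_disjoint_ball ?_
  rw [PiLp.dist_single_same, Real.dist_eq, abs_sub_comm,
    abs_of_nonneg (sub_nonneg.2 (pow_le_pow_right₀ (by norm_num) hij.le))]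
  exact two_pow_add_two_pow_le_four_pow_sub hij

theorem locallyFinite_closedBall_single_four_pow :
    LocallyFinite fun j : ℕ => closedBall (EuclideanSpace.single k ((4 : ℝ) ^ j)) (2 ^ j) := by
  refine locallyFinite_closedBall_of_tendsto (x₀ := 0) ?_
  simp only [dist_zero_left, PiLp.norm_single, norm_pow, Real.norm_ofNat, Nat.cofinite_eq_atTop]
  -- `4 ^ j - 2 ^ j - (2 ^ j - 1) = (2 ^ j - 1) ^ 2`
  refine tendsto_atTop_mono (fun j => ?_)
    (tendsto_atTop_add_const_right _ (-1) (tendsto_pow_atTop_atTop_of_one_lt one_lt_two))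
  have h4 : (4 : ℝ) ^ j = (2 ^ j) ^ 2 := by rw [← pow_mul, mul_comm, pow_mul]; norm_num
  nlinarith [sq_nonneg ((2 : ℝ) ^ j - 1)]

end FourPowBalls

theorem tent_function_finite_energy (n : ℕ) (hn : 1 ≤ n) (p : ℝ) (hp : (n : ℝ) < p) :
    let c : ℕ → EuclideanSpace ℝ (Fin n) :=
      fun j => EuclideanSpace.single ⟨0, hn⟩ ((4 : ℝ) ^ j)
    let u : EuclideanSpace ℝ (Fin n) → ℝ :=
      fun x => ∑' j : ℕ, max 0 (1 - dist x (c j) / 2 ^ j)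
    let g : EuclideanSpace ℝ (Fin n) → ℝ :=
      fun x => ∑' j : ℕ, Set.indicator (Metric.ball (c j) (2 ^ j)) (fun _ => ((2 : ℝ) ^ j)⁻¹) x
    -- u is Lipschitz on each ball
    (∀ (x₀ : EuclideanSpace ℝ (Fin n)) (r : ℝ),
        ∃ L : ℝ≥0, LipschitzOnWith L u (Metric.ball x₀ r)) ∧
    -- g bounds the local Lipschitz constant of u a.e.
    (∀ᵐ x ∂(volume : Measure (EuclideanSpace ℝ (Fin n))),
        ∃ ε > (0 : ℝ), ∀ y ∈ Metric.ball x ε, |u y - u x| ≤ g x * dist y x) ∧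
    Summable (fun j : ℕ => (2 : ℝ) ^ ((j : ℝ) * ((n : ℝ) - p))) ∧
    (∫⁻ x, ENNReal.ofReal (g x ^ p) ∂(volume : Measure (EuclideanSpace ℝ (Fin n)))
        = volume (Metric.ball (0 : EuclideanSpace ℝ (Fin n)) 1)
          * ENNReal.ofReal (∑' j : ℕ, (2 : ℝ) ^ ((j : ℝ) * ((n : ℝ) - p)))) ∧
    (∫⁻ x, ENNReal.ofReal (g x ^ p) ∂(volume : Measure (EuclideanSpace ℝ (Fin n))) < ⊤) := by
  intro c u g
  have hr (j : ℕ) : (0 : ℝ) < 2 ^ j := by positivity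
  have hdisj := pairwise_disjoint_ball_single_four_pow (⟨0, hn⟩ : Fin n)
  have hlip : LipschitzWith 1 u := lipschitzWith_tentSum hr
    (fun j => by simpa using inv_le_one_of_one_le₀ (one_le_pow₀ one_le_two)) hdisj
  have hsum : Summable fun j : ℕ => (2 : ℝ) ^ ((j : ℝ) * ((n : ℝ) - p)) :=
    summable_rpow_natCast_mul one_lt_two (sub_neg.2 hp)
  have henergy : ∫⁻ x, ENNReal.ofReal (g x ^ p) = volume (ball (0 : EuclideanSpace ℝ (Fin n)) 1)
      * ENNReal.ofReal (∑' j : ℕ, (2 : ℝ) ^ ((j : ℝ) * ((n : ℝ) - p))) := by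
    have := tsum_ofReal_inv_rpow_mul_addHaar_ball volume c two_pos
      (by rwa [finrank_euclideanSpace_fin])
    rw [finrank_euclideanSpace_fin] at this
    rw [← this, lintegral_ofReal_tsum_indicator_rpow volume (fun _ => measurableSet_ball) hdisj _
      (by linarith [(Nat.one_le_cast (α := ℝ)).2 hn])]
  refine ⟨fun _ _ => ⟨1, hlip.lipschitzOnWith⟩,
    ae_exists_abs_tentSum_sub_le volume hr hdisj (locallyFinite_closedBall_single_four_pow _)
      fun j => Measure.addHaar_sphere_of_ne_zero volume _ (hr j).ne', hsum, henergy, ?_⟩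
  rw [henergy]
  exact mul_lt_top measure_ball_lt_top ofReal_lt_top
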